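/- Let p : E → C and q : F → D be functors, let Φ̇ : E → E be a lifting of Φ : C → C along p (i.e. Φ∘p = p∘Φ̇), and let an adjunction (L̇ ⊣ Ṙ, η̇, ε̇) : E ⇄ F be a lifting of an adjunction (L ⊣ R, η, ε) : C ⇄ D along p, q (i.e. L∘p = q∘L̇, R∘q = p∘Ṙ, ηp = pη̇, εq = qε̇). Then the adjoint equivalence (Alg_{L̇,α̇} ⊣ Alg_{Ṙ,β̇}, η̇, ε̇) : Alg(Φ̇)|Fix_η̇(E) ⇄ Alg(L̇Φ̇Ṙ)|Fix_ε̇(F) obtained for Φ̇ and (L̇ ⊣ Ṙ) is a lifting along Alg(p), Alg(q) of the adjoint equivalence (Alg_{L,α} ⊣ Alg_{R,β}, η, ε) : Alg(Φ)|Fix_η(C) ⇄ Alg(LΦR)|Fix_ε(D) obtained for Φ and (L ⊣ R), where α̇ = L̇Φ̇η̇^{-1}, β̇ = η̇Φ̇Ṙ, α = LΦη^{-1}, β = ηΦR, and Alg(p) sends a Φ̇-algebra (X, a) to the Φ-algebra (pX, pa). -/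

import Mathlib

/-!
STATEMENT 5: Let `p : E → C` and `q : F → D` be functors, let `Φ̇ : E → E` be a lifting of
`Φ : C → C` along `p` (i.e. `Φ∘p = p∘Φ̇`), and let an adjunction `(L̇ ⊣ Ṙ, η̇, ε̇) : E ⇄ F` be a
lifting of an adjunction `(L ⊣ R, η, ε) : C ⇄ D` along `p, q` (i.e. `L∘p = q∘L̇`, `R∘q = p∘Ṙ`,
`ηp = pη̇`, `εq = qε̇`).  Then the adjoint equivalence
`(Alg_{L̇,α̇} ⊣ Alg_{Ṙ,β̇}, η̇, ε̇) : Alg(Φ̇)|Fix_η̇(E) ⇄ Alg(L̇Φ̇Ṙ)|Fix_ε̇(F)` obtained for `Φ̇` and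
`(L̇ ⊣ Ṙ)` is a lifting along `Alg(p), Alg(q)` of the adjoint equivalence
`(Alg_{L,α} ⊣ Alg_{R,β}, η, ε) : Alg(Φ)|Fix_η(C) ⇄ Alg(LΦR)|Fix_ε(D)` obtained for `Φ` and
`(L ⊣ R)`, where `α̇ = L̇Φ̇η̇⁻¹`, `β̇ = η̇Φ̇Ṙ`, `α = LΦη⁻¹`, `β = ηΦR`, and `Alg(p)` sends a
`Φ̇`-algebra `(X, a)` to the `Φ`-algebra `(pX, pa)`.
-/

open CategoryTheory CategoryTheory.Limits

universe v₁ v₂ v₃ v₄ u₁ u₂ u₃ u₄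

variable {C : Type u₁} [Category.{v₁} C] {D : Type u₂} [Category.{v₂} D]
  {E : Type u₃} [Category.{v₃} E] {F : Type u₄} [Category.{v₄} F]

/-- The restriction of the category of `Φ`-algebras to the full subcategory given by `P`. -/
abbrev AlgSub {C' : Type u₁} [Category.{v₁} C'] (Φ : C' ⥤ C') (P : C' → Prop) :=
  ObjectProperty.FullSubcategory (fun A : Endofunctor.Algebra Φ => P A.a)

/-- The lifted functor `Alg_{L,α}` sending `(X, a)` to `(LX, La ∘ α_X)` and `f` to `Lf`. -/
def algMap {C' : Type u₁} [Category.{v₁} C'] {D' : Type u₂} [Category.{v₂} D']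
    (Φ : C' ⥤ C') (Ψ : D' ⥤ D') (P : C' → Prop) (Q : D' → Prop)
    (L : C' ⥤ D') (hL : ∀ X : C', P X → Q (L.obj X))
    (α : ObjectProperty.ι P ⋙ L ⋙ Ψ ⟶ ObjectProperty.ι P ⋙ Φ ⋙ L) :
    AlgSub Φ P ⥤ AlgSub Ψ Q where
  obj A := ⟨⟨L.obj A.obj.a, α.app ⟨A.obj.a, A.property⟩ ≫ L.map A.obj.str⟩, hL _ A.property⟩
  map {A B} f := ⟨
    { f := L.map (Endofunctor.Algebra.Hom.f f.hom)
      h := by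
        have hn := α.naturality (X := ⟨A.obj.a, A.property⟩) (Y := ⟨B.obj.a, B.property⟩)
          ⟨Endofunctor.Algebra.Hom.f f.hom⟩
        have hf := Endofunctor.Algebra.Hom.h f.hom
        dsimp at hn ⊢
        rw [← Category.assoc, hn, Category.assoc, ← L.map_comp, hf, L.map_comp, Category.assoc] }⟩
  map_id A := by
    apply ObjectProperty.hom_ext
    apply Endofunctor.Algebra.ext
    show L.map (𝟙 A.obj.a) = 𝟙 (L.obj A.obj.a)
    simp
  map_comp {A B E} f g := by
    apply ObjectProperty.hom_ext
    apply Endofunctor.Algebra.ext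
    show L.map (Endofunctor.Algebra.Hom.f f.hom ≫ Endofunctor.Algebra.Hom.f g.hom) =
      L.map (Endofunctor.Algebra.Hom.f f.hom) ≫ L.map (Endofunctor.Algebra.Hom.f g.hom)
    simp

/-- `L` maps `Fix_η` into `Fix_ε`. -/
theorem isIso_counit_app_of_isIso_unit_app {C' : Type u₁} [Category.{v₁} C']
    {D' : Type u₂} [Category.{v₂} D'] {L : C' ⥤ D'} {R : D' ⥤ C'} (adj : L ⊣ R)
    (X : C') (h : IsIso (adj.unit.app X)) : IsIso (adj.counit.app (L.obj X)) := by
  haveI := h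
  haveI : IsIso (L.map (adj.unit.app X) ≫ adj.counit.app (L.obj X)) := by
    rw [adj.left_triangle_components X]; exact IsIso.id _
  exact IsIso.of_isIso_comp_left (L.map (adj.unit.app X)) (adj.counit.app (L.obj X))

/-- `R` maps `Fix_ε` into `Fix_η`. -/
theorem isIso_unit_app_of_isIso_counit_app {C' : Type u₁} [Category.{v₁} C']
    {D' : Type u₂} [Category.{v₂} D'] {L : C' ⥤ D'} {R : D' ⥤ C'} (adj : L ⊣ R)
    (Y : D') (h : IsIso (adj.counit.app Y)) : IsIso (adj.unit.app (R.obj Y)) := by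
  haveI := h
  haveI : IsIso (adj.unit.app (R.obj Y) ≫ R.map (adj.counit.app Y)) := by
    rw [adj.right_triangle_components Y]; exact IsIso.id _
  exact IsIso.of_isIso_comp_right (adj.unit.app (R.obj Y)) (R.map (adj.counit.app Y))


/-!
On `Fix_η`, the adjunction `Alg_{L,α} ⊣ Alg_{R,β}` is carried by `L ⊣ R` itself: the components of
`η` and `ε` are algebra morphisms by naturality and the triangle identities, and they are invertible
on the fixed-point subcategories. `Alg(p)` is `Alg_{p,id}`, and two composites of functors of this
shape agree as soon as the underlying functors agree and the structure transformations lie over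
each other. Since `p` preserves inverses and `η̇` lies over `η`, `q(L̇Φ̇η̇⁻¹) = LΦη⁻¹` and
`p(η̇Φ̇Ṙ) = ηΦR`, so both squares commute; the units and counits then lie over each other because
their underlying morphisms do.
-/

section Algebras

variable {C₀ : Type*} [Category C₀] {C₁ : Type*} [Category C₁]

theorem lifting_comp {C₂ D₀ D₁ D₂ : Type*} [Category C₂] [Category D₀] [Category D₁]
    [Category D₂] {F₀ : C₀ ⥤ C₁} {G₀ : C₁ ⥤ C₂} {F₁ : D₀ ⥤ D₁} {G₁ : D₁ ⥤ D₂}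
    {p : C₀ ⥤ D₀} {q : C₁ ⥤ D₁} {r : C₂ ⥤ D₂} (hF : F₀ ⋙ q = p ⋙ F₁) (hG : G₀ ⋙ r = q ⋙ G₁) :
    (F₀ ⋙ G₀) ⋙ r = p ⋙ F₁ ⋙ G₁ := by
  rw [Functor.assoc, hG, ← Functor.assoc, hF, Functor.assoc]

theorem CategoryTheory.Functor.map_heq_of_heq (F : C₀ ⥤ C₁) {X Y X' Y' : C₀} (hX : X = X')
    (hY : Y = Y') {f : X ⟶ Y} {g : X' ⟶ Y'} (h : f ≍ g) : F.map f ≍ F.map g := by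
  cases hX; cases hY; cases h; rfl

theorem isIso_of_heq {X Y X' Y' : C₀} (hX : X = X') (hY : Y = Y') {f : X ⟶ Y} {g : X' ⟶ Y'}
    (h : f ≍ g) [IsIso f] : IsIso g := by
  cases hX; cases hY; cases h; infer_instance

theorem inv_heq_inv {X Y Y' : C₀} (hY : Y = Y') {f : X ⟶ Y} {g : X ⟶ Y'} [IsIso f] [IsIso g]
    (h : f ≍ g) : inv f ≍ inv g := by
  cases hY; cases h; rfl

namespace AlgSub

variable {Φ : C₀ ⥤ C₀} {P : C₀ → Prop}

theorem ext_of_heq {A B : AlgSub Φ P} (h : A.obj.a = B.obj.a) (h' : A.obj.str ≍ B.obj.str) :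
    A = B := by
  obtain ⟨⟨X, a⟩, _⟩ := A
  obtain ⟨⟨Y, b⟩, _⟩ := B
  cases h; cases h'; rfl

theorem hom_ext {A B : AlgSub Φ P} {f g : A ⟶ B} (h : f.hom.f = g.hom.f) : f = g :=
  ObjectProperty.hom_ext _ (Endofunctor.Algebra.ext h)

theorem hom_heq_of_heq {A B A' B' : AlgSub Φ P} (hA : A = A') (hB : B = B') {f : A ⟶ B}
    {g : A' ⟶ B'} (h : f.hom.f ≍ g.hom.f) : f ≍ g := by
  cases hA; cases hB
  exact heq_of_eq (hom_ext (eq_of_heq h))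

theorem isIso_of_isIso_f {A B : AlgSub Φ P} (f : A ⟶ B) (hf : IsIso f.hom.f) : IsIso f :=
  have : IsIso ((ObjectProperty.ι _ ⋙ Endofunctor.Algebra.forget Φ).map f) := by
    change IsIso f.hom.f; infer_instance
  isIso_of_reflects_iso f (ObjectProperty.ι _ ⋙ Endofunctor.Algebra.forget Φ)

theorem functor_ext {Ψ : C₁ ⥤ C₁} {Q : C₁ → Prop} {G H : AlgSub Φ P ⥤ AlgSub Ψ Q}
    (hobj : ∀ A, G.obj A = H.obj A)
    (hmap : G ⋙ ObjectProperty.ι _ ⋙ Endofunctor.Algebra.forget Ψ =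
      H ⋙ ObjectProperty.ι _ ⋙ Endofunctor.Algebra.forget Ψ) : G = H := by
  refine CategoryTheory.Functor.ext hobj fun A B f => ?_
  apply (ObjectProperty.ι _ ⋙ Endofunctor.Algebra.forget Ψ).map_injective
  rw [Functor.map_comp, Functor.map_comp, eqToHom_map, eqToHom_map]
  exact Functor.congr_hom hmap f

end AlgSub

end Algebras

section AlgMap

variable {C₀ : Type*} [Category C₀] {C₁ : Type*} [Category C₁]
  {D₀ : Type*} [Category D₀] {D₁ : Type*} [Category D₁]

/-- `Alg(p)`, realised as `Alg_{p,α}` for the identity transformation `p ⋙ Φ = Φd ⋙ p`. -/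
def algLift (p : C₀ ⥤ C₁) {Φd : C₀ ⥤ C₀} {Φ : C₁ ⥤ C₁} (hΦ : Φd ⋙ p = p ⋙ Φ)
    {P : C₀ → Prop} {Q : C₁ → Prop} (hPQ : ∀ X, P X → Q (p.obj X)) :
    AlgSub Φd P ⥤ AlgSub Φ Q :=
  algMap Φd Φ P Q p hPQ (Functor.whiskerLeft _ (eqToHom hΦ.symm))

theorem algLift_obj_str_heq (p : C₀ ⥤ C₁) {Φd : C₀ ⥤ C₀} {Φ : C₁ ⥤ C₁} (hΦ : Φd ⋙ p = p ⋙ Φ)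
    {P : C₀ → Prop} {Q : C₁ → Prop} (hPQ : ∀ X, P X → Q (p.obj X)) (A : AlgSub Φd P) :
    ((algLift p hΦ hPQ).obj A).obj.str ≍ p.map A.obj.str := by
  simp only [algLift, algMap, Functor.whiskerLeft_app, eqToHom_app]
  exact eqToHom_comp_heq _ _

theorem algMap_comp_algLift_eq {p : C₀ ⥤ C₁} {q : D₀ ⥤ D₁}
    {Φd : C₀ ⥤ C₀} {Ψd : D₀ ⥤ D₀} {Φ : C₁ ⥤ C₁} {Ψ : D₁ ⥤ D₁}
    (hΦ : Φd ⋙ p = p ⋙ Φ) (hΨ : Ψd ⋙ q = q ⋙ Ψ)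
    (P₀ : C₀ → Prop) (Q₀ : D₀ → Prop) (P : C₁ → Prop) (Q : D₁ → Prop)
    (hP : ∀ X, P₀ X → P (p.obj X)) (hQ : ∀ Y, Q₀ Y → Q (q.obj Y))
    {Ld : C₀ ⥤ D₀} {L : C₁ ⥤ D₁} (hL : Ld ⋙ q = p ⋙ L)
    (hLd : ∀ X, P₀ X → Q₀ (Ld.obj X)) (hLP : ∀ X, P X → Q (L.obj X))
    (αd : ObjectProperty.ι P₀ ⋙ Ld ⋙ Ψd ⟶ ObjectProperty.ι P₀ ⋙ Φd ⋙ Ld)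
    (α : ObjectProperty.ι P ⋙ L ⋙ Ψ ⟶ ObjectProperty.ι P ⋙ Φ ⋙ L)
    (hα : ∀ X : ObjectProperty.FullSubcategory P₀,
      q.map (αd.app X) ≍ α.app ⟨p.obj X.obj, hP _ X.property⟩) :
    algMap Φd Ψd P₀ Q₀ Ld hLd αd ⋙ algLift q hΨ hQ =
      algLift p hΦ hP ⋙ algMap Φ Ψ P Q L hLP α := by
  refine AlgSub.functor_ext (fun A => AlgSub.ext_of_heq (Functor.congr_obj hL A.obj.a) ?_) ?_
  · refine (algLift_obj_str_heq q hΨ hQ _).trans ?_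
    change q.map (αd.app ⟨A.obj.a, A.property⟩ ≫ Ld.map A.obj.str) ≍
      α.app ⟨p.obj A.obj.a, hP _ A.property⟩ ≫ L.map ((algLift p hΦ hP).obj A).obj.str
    rw [q.map_comp]
    refine heq_comp ?_ ?_ (Functor.congr_obj hL A.obj.a) (hα _) ?_
    · exact Functor.congr_obj (lifting_comp hL hΨ) A.obj.a
    · exact Functor.congr_obj (lifting_comp hΦ hL) A.obj.a
    · exact (Functor.hcongr_hom hL A.obj.str :).trans
        (L.map_heq_of_heq (Functor.congr_obj hΦ A.obj.a) rfl
          (algLift_obj_str_heq p hΦ hP A).symm)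
  · change ObjectProperty.ι _ ⋙ Endofunctor.Algebra.forget Φd ⋙ Ld ⋙ q =
      ObjectProperty.ι _ ⋙ Endofunctor.Algebra.forget Φd ⋙ p ⋙ L
    rw [hL]

end AlgMap

section AlgAdjunction

variable {C₀ : Type*} [Category C₀] {D₀ : Type*} [Category D₀]
  (Φ : C₀ ⥤ C₀) {L : C₀ ⥤ D₀} {R : D₀ ⥤ C₀} (adj : L ⊣ R)
  {α : ObjectProperty.ι (fun X : C₀ => IsIso (adj.unit.app X)) ⋙ L ⋙ (R ⋙ Φ ⋙ L) ⟶
       ObjectProperty.ι (fun X : C₀ => IsIso (adj.unit.app X)) ⋙ Φ ⋙ L}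
  (hα : ∀ X : ObjectProperty.FullSubcategory (fun X : C₀ => IsIso (adj.unit.app X)),
    α.app X = L.map (Φ.map (@CategoryTheory.inv _ _ _ _ (adj.unit.app X.obj) X.property)))
  {β : ObjectProperty.ι (fun Y : D₀ => IsIso (adj.counit.app Y)) ⋙ R ⋙ Φ ⟶
       ObjectProperty.ι (fun Y : D₀ => IsIso (adj.counit.app Y)) ⋙ (R ⋙ Φ ⋙ L) ⋙ R}
  (hβ : ∀ Y : ObjectProperty.FullSubcategory (fun Y : D₀ => IsIso (adj.counit.app Y)),
    β.app Y = adj.unit.app (Φ.obj (R.obj Y.obj)))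

def algMapAdjunction :
    algMap Φ (R ⋙ Φ ⋙ L) (fun X : C₀ => IsIso (adj.unit.app X))
        (fun Y : D₀ => IsIso (adj.counit.app Y)) L
        (fun X => isIso_counit_app_of_isIso_unit_app adj X) α ⊣
      algMap (R ⋙ Φ ⋙ L) Φ (fun Y : D₀ => IsIso (adj.counit.app Y))
        (fun X : C₀ => IsIso (adj.unit.app X)) R
        (fun Y => isIso_unit_app_of_isIso_counit_app adj Y) β where
  unit.app A := ⟨
    { f := adj.unit.app A.obj.a
      h := by
        have := A.property
        dsimp [algMap]
        simp only [hα, hβ, Functor.map_inv, Functor.map_comp]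
        rw [← adj.unit_naturality_assoc, IsIso.hom_inv_id_assoc, adj.unit_naturality] }⟩
  counit.app B := ⟨
    { f := adj.counit.app B.obj.a
      h := by
        simp [algMap, hα, hβ, ← L.map_comp_assoc, ← Φ.map_comp] }⟩
  unit.naturality _ _ f := AlgSub.hom_ext (adj.unit.naturality f.hom.f)
  counit.naturality _ _ f := AlgSub.hom_ext (adj.counit.naturality f.hom.f)
  left_triangle_components A := AlgSub.hom_ext (adj.left_triangle_components A.obj.a)
  right_triangle_components B := AlgSub.hom_ext (adj.right_triangle_components B.obj.a)

theorem algMapAdjunction_isIso_unit : IsIso (algMapAdjunction Φ adj hα hβ).unit :=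
  (NatTrans.isIso_iff_isIso_app _).2 fun A => AlgSub.isIso_of_isIso_f _ A.property

theorem algMapAdjunction_isIso_counit : IsIso (algMapAdjunction Φ adj hα hβ).counit :=
  (NatTrans.isIso_iff_isIso_app _).2 fun B => AlgSub.isIso_of_isIso_f _ B.property

end AlgAdjunction

section Lifting

variable {p : E ⥤ C} {q : F ⥤ D} {L : C ⥤ D} {R : D ⥤ C} {adj : L ⊣ R}
  {Ld : E ⥤ F} {Rd : F ⥤ E} {adjd : Ld ⊣ Rd}

theorem isIso_unit_app_of_lifting (hLq : Ld ⋙ q = p ⋙ L) (hRp : Rd ⋙ p = q ⋙ R)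
    (hunit : ∀ X : E, p.map (adjd.unit.app X) ≍ adj.unit.app (p.obj X))
    (X : E) (hX : IsIso (adjd.unit.app X)) : IsIso (adj.unit.app (p.obj X)) :=
  isIso_of_heq rfl (Functor.congr_obj (lifting_comp hLq hRp) X) (hunit X)

theorem isIso_counit_app_of_lifting (hLq : Ld ⋙ q = p ⋙ L) (hRp : Rd ⋙ p = q ⋙ R)
    (hcounit : ∀ Y : F, q.map (adjd.counit.app Y) ≍ adj.counit.app (q.obj Y))
    (Y : F) (hY : IsIso (adjd.counit.app Y)) : IsIso (adj.counit.app (q.obj Y)) :=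
  isIso_of_heq (Functor.congr_obj (lifting_comp hRp hLq) Y) rfl (hcounit Y)

theorem map_map_inv_unit_app_heq_of_lifting {Φ : C ⥤ C} {Φd : E ⥤ E} (hΦ : Φd ⋙ p = p ⋙ Φ)
    (hLq : Ld ⋙ q = p ⋙ L) (hRp : Rd ⋙ p = q ⋙ R)
    (hunit : ∀ X : E, p.map (adjd.unit.app X) ≍ adj.unit.app (p.obj X))
    (X : E) [IsIso (adjd.unit.app X)] [IsIso (adj.unit.app (p.obj X))] :
    q.map (Ld.map (Φd.map (inv (adjd.unit.app X)))) ≍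
      L.map (Φ.map (inv (adj.unit.app (p.obj X)))) :=
  (Functor.hcongr_hom (lifting_comp hΦ hLq) _ :).trans <|
    (Φ ⋙ L).map_heq_of_heq (Functor.congr_obj (lifting_comp hLq hRp) X) rfl <| by
      rw [Functor.map_inv]
      exact inv_heq_inv (Functor.congr_obj (lifting_comp hLq hRp) X) (hunit X)

end Lifting

theorem stmt5
    -- the two adjunctions and the lifting data
    (p : E ⥤ C) (q : F ⥤ D)
    (Φ : C ⥤ C) (Φd : E ⥤ E) (hΦ : Φd ⋙ p = p ⋙ Φ)
    (L : C ⥤ D) (R : D ⥤ C) (adj : L ⊣ R)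
    (Ld : E ⥤ F) (Rd : F ⥤ E) (adjd : Ld ⊣ Rd)
    (hLq : Ld ⋙ q = p ⋙ L) (hRp : Rd ⋙ p = q ⋙ R)
    (hunit : ∀ X : E, HEq (p.map (adjd.unit.app X)) (adj.unit.app (p.obj X)))
    (hcounit : ∀ Y : F, HEq (q.map (adjd.counit.app Y)) (adj.counit.app (q.obj Y)))
    -- `α = LΦη⁻¹` and `β = ηΦR`
    (α : ObjectProperty.ι (fun X : C => IsIso (adj.unit.app X)) ⋙ L ⋙ (R ⋙ Φ ⋙ L) ⟶
         ObjectProperty.ι (fun X : C => IsIso (adj.unit.app X)) ⋙ Φ ⋙ L)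
    (hα : ∀ X : ObjectProperty.FullSubcategory (fun X : C => IsIso (adj.unit.app X)),
      α.app X = L.map (Φ.map (@CategoryTheory.inv _ _ _ _ (adj.unit.app X.obj) X.property)))
    (β : ObjectProperty.ι (fun Y : D => IsIso (adj.counit.app Y)) ⋙ R ⋙ Φ ⟶
         ObjectProperty.ι (fun Y : D => IsIso (adj.counit.app Y)) ⋙ (R ⋙ Φ ⋙ L) ⋙ R)
    (hβ : ∀ Y : ObjectProperty.FullSubcategory (fun Y : D => IsIso (adj.counit.app Y)),
      β.app Y = adj.unit.app (Φ.obj (R.obj Y.obj)))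
    -- `α̇ = L̇Φ̇η̇⁻¹` and `β̇ = η̇Φ̇Ṙ`
    (αd : ObjectProperty.ι (fun X : E => IsIso (adjd.unit.app X)) ⋙ Ld ⋙
            (Rd ⋙ Φd ⋙ Ld) ⟶
          ObjectProperty.ι (fun X : E => IsIso (adjd.unit.app X)) ⋙ Φd ⋙ Ld)
    (hαd : ∀ X : ObjectProperty.FullSubcategory (fun X : E => IsIso (adjd.unit.app X)),
      αd.app X = Ld.map (Φd.map (@CategoryTheory.inv _ _ _ _ (adjd.unit.app X.obj) X.property)))
    (βd : ObjectProperty.ι (fun Y : F => IsIso (adjd.counit.app Y)) ⋙ Rd ⋙ Φd ⟶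
          ObjectProperty.ι (fun Y : F => IsIso (adjd.counit.app Y)) ⋙
            (Rd ⋙ Φd ⋙ Ld) ⋙ Rd)
    (hβd : ∀ Y : ObjectProperty.FullSubcategory (fun Y : F => IsIso (adjd.counit.app Y)),
      βd.app Y = adjd.unit.app (Φd.obj (Rd.obj Y.obj))) :
    -- the dotted adjoint equivalence ...
    ∃ adjd' : algMap Φd (Rd ⋙ Φd ⋙ Ld) (fun X : E => IsIso (adjd.unit.app X))
                (fun Y : F => IsIso (adjd.counit.app Y)) Ld
                (fun X => isIso_counit_app_of_isIso_unit_app adjd X) αd ⊣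
              algMap (Rd ⋙ Φd ⋙ Ld) Φd (fun Y : F => IsIso (adjd.counit.app Y))
                (fun X : E => IsIso (adjd.unit.app X)) Rd
                (fun Y => isIso_unit_app_of_isIso_counit_app adjd Y) βd,
    -- ... and the undotted adjoint equivalence ...
    ∃ adj' : algMap Φ (R ⋙ Φ ⋙ L) (fun X : C => IsIso (adj.unit.app X))
                (fun Y : D => IsIso (adj.counit.app Y)) L
                (fun X => isIso_counit_app_of_isIso_unit_app adj X) α ⊣
             algMap (R ⋙ Φ ⋙ L) Φ (fun Y : D => IsIso (adj.counit.app Y))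
                (fun X : C => IsIso (adj.unit.app X)) R
                (fun Y => isIso_unit_app_of_isIso_counit_app adj Y) β,
    -- ... with the projection functors `Alg(p)` and `Alg(q)` restricted to the subcategories,
    ∃ Algp : AlgSub Φd (fun X : E => IsIso (adjd.unit.app X)) ⥤
             AlgSub Φ (fun X : C => IsIso (adj.unit.app X)),
    ∃ Algq : AlgSub (Rd ⋙ Φd ⋙ Ld) (fun Y : F => IsIso (adjd.counit.app Y)) ⥤
             AlgSub (R ⋙ Φ ⋙ L) (fun Y : D => IsIso (adj.counit.app Y)),
      -- both equivalences have unit `η` (resp. `η̇`) and counit `ε` (resp. `ε̇`) and are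
      -- adjoint equivalences
      (∀ A, Endofunctor.Algebra.Hom.f (adjd'.unit.app A).hom = adjd.unit.app A.obj.a) ∧
      (∀ B, Endofunctor.Algebra.Hom.f (adjd'.counit.app B).hom = adjd.counit.app B.obj.a) ∧
      IsIso adjd'.unit ∧ IsIso adjd'.counit ∧
      (∀ A, Endofunctor.Algebra.Hom.f (adj'.unit.app A).hom = adj.unit.app A.obj.a) ∧
      (∀ B, Endofunctor.Algebra.Hom.f (adj'.counit.app B).hom = adj.counit.app B.obj.a) ∧
      IsIso adj'.unit ∧ IsIso adj'.counit ∧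
      -- `Alg(p)` sends a `Φ̇`-algebra `(X, a)` to the `Φ`-algebra `(pX, pa)` (and acts as `p`
      -- on morphisms), and similarly `Alg(q)`
      (∀ A, (Algp.obj A).obj.a = p.obj A.obj.a) ∧
      (∀ A, HEq (Algp.obj A).obj.str (p.map A.obj.str)) ∧
      (∀ (A B) (f : A ⟶ B), HEq (Endofunctor.Algebra.Hom.f (Algp.map f).hom)
        (p.map (Endofunctor.Algebra.Hom.f f.hom))) ∧
      (∀ B', (Algq.obj B').obj.a = q.obj B'.obj.a) ∧
      (∀ B', HEq (Algq.obj B').obj.str (q.map B'.obj.str)) ∧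
      (∀ (B' B'') (g : B' ⟶ B''), HEq (Endofunctor.Algebra.Hom.f (Algq.map g).hom)
        (q.map (Endofunctor.Algebra.Hom.f g.hom))) ∧
      -- the dotted equivalence is a lifting of the undotted one along `Alg(p)`, `Alg(q)`:
      -- the functors commute with the projections ...
      (algMap Φd (Rd ⋙ Φd ⋙ Ld) _ _ Ld (fun X => isIso_counit_app_of_isIso_unit_app adjd X)
          αd ⋙ Algq =
        Algp ⋙ algMap Φ (R ⋙ Φ ⋙ L) _ _ L
          (fun X => isIso_counit_app_of_isIso_unit_app adj X) α) ∧
      (algMap (Rd ⋙ Φd ⋙ Ld) Φd _ _ Rd (fun Y => isIso_unit_app_of_isIso_counit_app adjd Y)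
          βd ⋙ Algp =
        Algq ⋙ algMap (R ⋙ Φ ⋙ L) Φ _ _ R
          (fun Y => isIso_unit_app_of_isIso_counit_app adj Y) β) ∧
      -- ... and the unit and counit are liftings of the unit and counit
      (∀ A, HEq (Algp.map (adjd'.unit.app A)) (adj'.unit.app (Algp.obj A))) ∧
      (∀ B', HEq (Algq.map (adjd'.counit.app B')) (adj'.counit.app (Algq.obj B'))) := by
  have hΨ : (Rd ⋙ Φd ⋙ Ld) ⋙ q = q ⋙ R ⋙ Φ ⋙ L := lifting_comp hRp (lifting_comp hΦ hLq)
  have hP := isIso_unit_app_of_lifting hLq hRp hunit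
  have hQ := isIso_counit_app_of_lifting hLq hRp hcounit
  have sqL := algMap_comp_algLift_eq hΦ hΨ _ (fun Y => IsIso (adjd.counit.app Y)) _
    (fun Y => IsIso (adj.counit.app Y)) hP hQ hLq
    (isIso_counit_app_of_isIso_unit_app adjd) (isIso_counit_app_of_isIso_unit_app adj) αd α
    fun X => by
      have := X.property
      have := hP _ X.property
      rw [hαd, hα]
      exact map_map_inv_unit_app_heq_of_lifting hΦ hLq hRp hunit X.obj
  have sqR := algMap_comp_algLift_eq hΨ hΦ _ (fun X => IsIso (adjd.unit.app X)) _
    (fun X => IsIso (adj.unit.app X)) hQ hP hRp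
    (isIso_unit_app_of_isIso_counit_app adjd) (isIso_unit_app_of_isIso_counit_app adj) βd β
    fun Y => by
      rw [hβd, hβ]
      exact (hunit _).trans
        (congr_arg_heq adj.unit.app (Functor.congr_obj (lifting_comp hRp hΦ) Y.obj))
  refine ⟨algMapAdjunction Φd adjd hαd hβd, algMapAdjunction Φ adj hα hβ, algLift p hΦ hP,
    algLift q hΨ hQ, fun _ => rfl, fun _ => rfl, algMapAdjunction_isIso_unit _ _ _ _,
    algMapAdjunction_isIso_counit _ _ _ _, fun _ => rfl, fun _ => rfl,
    algMapAdjunction_isIso_unit _ _ _ _, algMapAdjunction_isIso_counit _ _ _ _, fun _ => rfl,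
    algLift_obj_str_heq _ _ _, fun _ _ _ => HEq.rfl, fun _ => rfl,
    algLift_obj_str_heq _ _ _, fun _ _ _ => HEq.rfl, sqL, sqR,
    fun A => AlgSub.hom_heq_of_heq rfl (Functor.congr_obj (lifting_comp sqL sqR) A) (hunit _),
    fun B => AlgSub.hom_heq_of_heq (Functor.congr_obj (lifting_comp sqR sqL) B) rfl (hcounit _)⟩
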